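/- Let X be a finite type (of genres) and α a type (of items). Let q : α → X → ℝ be nonnegative, w : ℕ → ℝ antitone and nonnegative, c : X → ℝ nonnegative, and φ : ℝ → ℝ nondecreasing and concave on [0, ∞), and define the calibration sequence function F on a list S = s₁ … s_k by F(S) = Σ_{x ∈ X} c(x)·φ(Σ_{i=1}^{k} w(i)·q(s_i, x)). Let r : α → ℝ be a nonnegative quality score and define the quality sequence function m(S) = Σ_{i=1}^{k} r(s_i). Then for any λ, μ ≥ 0, the combined objective λ·m + μ·F is ordered-submodular. -/

import Mathlib

/-!
Ordered-submodularity is preserved by nonnegative combinations, so it suffices to treat the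
quality term and each genre term `φ (∑ᵢ w (i + 1) q (sᵢ, x))` separately. The quality term is
modular. In a genre term, the item at position `n + 1` of `A ++ [·] ++ B` contributes
`w (n + 1) q (·, x)` to the argument of `φ` whatever its neighbours are. With `a` and `b` the
contributions of `A` and of `B`, replacing `s` by `s̄` can lower `φ` at most to `φ (a + b)`, by
monotonicity, and with `u = w (n + 1) q (s, x)` the gain `φ (a + b + u) - φ (a + b)` is at most
`φ (a + u) - φ a`, by concavity.
-/

/-- A sequence function `f : List α → ℝ` is **ordered-submodular** if for all lists
`A, B` and elements `s, s̄`: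
`f(A ++ [s]) − f(A) ≥ f(A ++ [s] ++ B) − f(A ++ [s̄] ++ B)`. -/
def OrderedSubmodular {α : Type*} (f : List α → ℝ) : Prop :=
  ∀ (A B : List α) (s sbar : α),
    f (A ++ [s] ++ B) - f (A ++ [sbar] ++ B) ≤ f (A ++ [s]) - f A

open Set

section DiminishingIncrements

variable {𝕜 : Type*} [Field 𝕜] [LinearOrder 𝕜] [IsStrictOrderedRing 𝕜]

theorem ConcaveOn.map_add_sub_map_le_of_le {s : Set 𝕜} {f : 𝕜 → 𝕜} (hf : ConcaveOn 𝕜 s f)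
    {x y t : 𝕜} (hx : x ∈ s) (hyt : y + t ∈ s) (hxy : x ≤ y) (ht : 0 ≤ t) :
    f (y + t) - f y ≤ f (x + t) - f x := by
  rcases ht.eq_or_lt with rfl | ht
  · simp
  have hD : 0 < y + t - x := by linarith
  -- `x + t` and `y` are the two convex combinations of `x` and `y + t` with swapped weights
  set θ := (y - x) / (y + t - x) with hθ
  have hθ₀ : 0 ≤ θ := div_nonneg (by linarith) hD.le
  have hθ₁ : 0 ≤ 1 - θ := by rw [sub_nonneg, hθ, div_le_one hD]; linarith
  have h₁ := hf.2 hx hyt hθ₀ hθ₁ (by ring)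
  have h₂ := hf.2 hx hyt hθ₁ hθ₀ (by ring)
  have e₁ : θ • x + (1 - θ) • (y + t) = x + t := by
    rw [smul_eq_mul, smul_eq_mul, hθ]; field_simp; ring
  have e₂ : (1 - θ) • x + θ • (y + t) = y := by
    rw [smul_eq_mul, smul_eq_mul, hθ]; field_simp; ring
  rw [e₁] at h₁
  rw [e₂] at h₂
  simp only [smul_eq_mul] at h₁ h₂
  linarith

end DiminishingIncrements

namespace OrderedSubmodular

variable {α : Type*} {f g : List α → ℝ}

theorem add (hf : OrderedSubmodular f) (hg : OrderedSubmodular g) :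
    OrderedSubmodular fun S => f S + g S := fun A B s sbar => by
  linarith [hf A B s sbar, hg A B s sbar]

theorem const_mul (hf : OrderedSubmodular f) {c : ℝ} (hc : 0 ≤ c) :
    OrderedSubmodular fun S => c * f S := fun A B s sbar => by
  simpa only [← mul_sub] using mul_le_mul_of_nonneg_left (hf A B s sbar) hc

theorem sum {ι : Type*} (t : Finset ι) {f : ι → List α → ℝ}
    (hf : ∀ i ∈ t, OrderedSubmodular (f i)) :
    OrderedSubmodular fun S => ∑ i ∈ t, f i S := fun A B s sbar => by
  simp only [← Finset.sum_sub_distrib]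
  exact Finset.sum_le_sum fun i hi => hf i hi A B s sbar

end OrderedSubmodular

theorem orderedSubmodular_sum_map {α : Type*} {r : α → ℝ} (hr : ∀ a, 0 ≤ r a) :
    OrderedSubmodular fun S : List α => (S.map r).sum := fun A B s sbar => by
  simp only [List.map_append, List.sum_append, List.map_cons, List.map_nil, List.sum_cons,
    List.sum_nil]
  linarith [hr sbar]

section PositionalSum

variable {α : Type*} (v : ℕ → α → ℝ)

/-- `∑ᵢ v (k + i) Lᵢ`: the item at index `i` of `L` is weighted as sitting at position `k + i`. -/
def positionalSum (k : ℕ) (L : List α) : ℝ :=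
  ((L.zipIdx k).map fun p => v p.2 p.1).sum

theorem positionalSum_append (k : ℕ) (L₁ L₂ : List α) :
    positionalSum v k (L₁ ++ L₂) = positionalSum v k L₁ + positionalSum v (k + L₁.length) L₂ := by
  simp only [positionalSum, List.zipIdx_append, List.map_append, List.sum_append]

theorem positionalSum_singleton (k : ℕ) (a : α) : positionalSum v k [a] = v k a := by
  simp [positionalSum]

variable {v}

theorem positionalSum_nonneg (hv : ∀ i a, 0 ≤ v i a) (k : ℕ) (L : List α) :
    0 ≤ positionalSum v k L :=
  List.sum_nonneg fun _ hx => by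
    obtain ⟨p, -, rfl⟩ := List.mem_map.1 hx
    exact hv p.2 p.1

theorem orderedSubmodular_comp_positionalSum (hv : ∀ i a, 0 ≤ v i a) {φ : ℝ → ℝ}
    (hφ_mono : MonotoneOn φ (Ici 0)) (hφ_conc : ConcaveOn ℝ (Ici 0) φ) :
    OrderedSubmodular fun S => φ (positionalSum v 0 S) := by
  intro A B s sbar
  simp only [positionalSum_append, positionalSum_singleton, zero_add, List.length_append,
    List.length_singleton]
  set n := A.length
  set a := positionalSum v 0 A
  set b := positionalSum v (n + 1) B
  have ha : 0 ≤ a := positionalSum_nonneg hv _ _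
  have hb : 0 ≤ b := positionalSum_nonneg hv _ _
  have hs := hv n s
  have hsbar := hv n sbar
  have replace : φ (a + b) ≤ φ (a + v n sbar + b) :=
    hφ_mono (mem_Ici.2 (by linarith)) (mem_Ici.2 (by linarith)) (by linarith)
  have diminish : φ (a + b + v n s) - φ (a + b) ≤ φ (a + v n s) - φ a :=
    hφ_conc.map_add_sub_map_le_of_le ha (mem_Ici.2 (by linarith)) (by linarith) hs
  rw [add_right_comm a (v n s) b]
  linarith

end PositionalSum

theorem quality_plus_calibration_orderedSubmodular_general {X : Type*} [Fintype X]
    {α : Type*}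
    (q : α → X → ℝ) (hq : ∀ i x, 0 ≤ q i x)
    (w : ℕ → ℝ) (hw_nonneg : ∀ i, 0 ≤ w i)
    (c : X → ℝ) (hc : ∀ x, 0 ≤ c x)
    (φ : ℝ → ℝ) (hφ_mono : MonotoneOn φ (Set.Ici (0 : ℝ)))
    (hφ_conc : ConcaveOn ℝ (Set.Ici (0 : ℝ)) φ)
    (r : α → ℝ) (hr : ∀ a, 0 ≤ r a)
    (lam mu : ℝ) (hlam : 0 ≤ lam) (hmu : 0 ≤ mu) :
    OrderedSubmodular (fun S : List α =>
      lam * (S.map r).sum +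
        mu * ∑ x : X,
          c x * φ ((S.zipIdx.map (fun pr => w (pr.2 + 1) * q pr.1 x)).sum)) := by
  have genre (x : X) :
      OrderedSubmodular fun S : List α => φ (positionalSum (fun i a => w (i + 1) * q a x) 0 S) :=
    orderedSubmodular_comp_positionalSum (fun i a => mul_nonneg (hw_nonneg _) (hq a x))
      hφ_mono hφ_conc
  have calibration := OrderedSubmodular.sum Finset.univ fun x _ => (genre x).const_mul (hc x)
  exact ((orderedSubmodular_sum_map hr).const_mul hlam).add (calibration.const_mul hmu)

/-- combining quality and calibration.  With the calibration
objective `F(S) = Σ_{x ∈ X} c(x) · φ(Σ_{i=1}^{k} w(i) · q(s_i, x))` and the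
modular quality objective `m(S) = Σ_{i=1}^{k} r(s_i)`, any nonnegative combination
`λ·m + μ·F` is ordered-submodular. -/
theorem quality_plus_calibration_orderedSubmodular {X : Type*} [Fintype X]
    {α : Type*}
    (q : α → X → ℝ) (hq : ∀ i x, 0 ≤ q i x)
    (w : ℕ → ℝ) (hw_anti : ∀ i j : ℕ, i ≤ j → w j ≤ w i) (hw_nonneg : ∀ i, 0 ≤ w i)
    (c : X → ℝ) (hc : ∀ x, 0 ≤ c x)
    (φ : ℝ → ℝ) (hφ_mono : MonotoneOn φ (Set.Ici (0 : ℝ)))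
    (hφ_conc : ConcaveOn ℝ (Set.Ici (0 : ℝ)) φ)
    (r : α → ℝ) (hr : ∀ a, 0 ≤ r a)
    (lam mu : ℝ) (hlam : 0 ≤ lam) (hmu : 0 ≤ mu) :
    OrderedSubmodular (fun S : List α =>
      lam * (S.map r).sum +
        mu * ∑ x : X,
          c x * φ ((S.zipIdx.map (fun pr => w (pr.2 + 1) * q pr.1 x)).sum)) :=
  quality_plus_calibration_orderedSubmodular_general q hq w hw_nonneg c hc φ hφ_mono hφ_conc r hr
    lam mu hlam hmu
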